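/- For fixed γ > 0, the function Λ ↦ T_max(γ,Λ) is strictly decreasing in Λ on (0,∞). -/

import Mathlib

/-!
With `c = Λ / γ` one has `γ · T_max = Tmax 1 c`. For `c ≤ 1` put `θ = arccos c ∈ [0, π/2)`: then
`r = tan θ` and `Tmax 1 c = θ / sin θ`. For `c ≥ 1` put `s = arcosh c ≥ 0`: then `r = tanh s` and
`Tmax 1 c = s / sinh s`. As `c` grows, `θ` decreases and `s` increases, while `sin θ / θ` decreases
(concavity of `sin`) and `sinh s / s` increases (convexity of `sinh`); both branches equal `1` at
`c = 1`, so they glue to a strictly decreasing function.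
-/

noncomputable def artanh (x : ℝ) : ℝ := (1/2) * Real.log ((1 + x) / (1 - x))

noncomputable def Tmax (γ Λ : ℝ) : ℝ :=
  let r := Real.sqrt |(γ / Λ) ^ 2 - 1|
  if Λ < γ then (1 / (Λ * r)) * Real.arctan r
  else if γ = Λ then 1 / Λ
  else (1 / (Λ * r)) * artanh r

open Set

namespace Real

noncomputable def sinhc (x : ℝ) : ℝ := if x = 0 then 1 else sinh x / x

theorem strictConvexOn_sinh_Ici : StrictConvexOn ℝ (Ici 0) sinh :=
  strictConvexOn_of_deriv2_pos (convex_Ici 0) continuous_sinh.continuousOn fun x hx => by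
    rw [interior_Ici] at hx
    simpa using hx

theorem strictAntiOn_sinc : StrictAntiOn sinc (Icc 0 π) := by
  intro x hx y hy hxy
  rcases hx.1.eq_or_lt with rfl | hx0
  · rw [sinc_zero, sinc_of_ne_zero hxy.ne', div_lt_one hxy]
    exact sin_lt hxy
  · have hy0 := hx0.trans hxy
    have key := strictConcaveOn_sin_Icc.secant_strict_mono (a := 0) ⟨le_rfl, pi_pos.le⟩ hx hy
      hx0.ne' hy0.ne' hxy
    simpa [sinc_of_ne_zero hx0.ne', sinc_of_ne_zero hy0.ne'] using key

theorem sinc_pos_of_mem_Ioo {x : ℝ} (hx : x ∈ Ioo (-π) π) : 0 < sinc x := by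
  rcases lt_trichotomy x 0 with hx0 | rfl | hx0
  · rw [sinc_of_ne_zero hx0.ne]
    exact div_pos_of_neg_of_neg (sin_neg_of_neg_of_neg_pi_lt hx0 hx.1) hx0
  · simp
  · rw [sinc_of_ne_zero hx0.ne']
    exact div_pos (sin_pos_of_pos_of_lt_pi hx0 hx.2) hx0

theorem sinhc_zero : sinhc 0 = 1 := by simp [sinhc]

theorem sinhc_of_ne_zero {x : ℝ} (hx : x ≠ 0) : sinhc x = sinh x / x := by simp [sinhc, hx]

theorem sinhc_pos (x : ℝ) : 0 < sinhc x := by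
  rcases lt_trichotomy x 0 with hx0 | rfl | hx0
  · rw [sinhc_of_ne_zero hx0.ne]
    exact div_pos_of_neg_of_neg (sinh_neg_iff.2 hx0) hx0
  · simp [sinhc_zero]
  · rw [sinhc_of_ne_zero hx0.ne']
    exact div_pos (sinh_pos_iff.2 hx0) hx0

theorem strictMonoOn_sinhc : StrictMonoOn sinhc (Ici 0) := by
  intro x hx y hy hxy
  rcases (mem_Ici.1 hx).eq_or_lt with rfl | hx0
  · rw [sinhc_zero, sinhc_of_ne_zero hxy.ne', one_lt_div hxy]
    exact self_lt_sinh_iff.2 hxy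
  · have hy0 := hx0.trans hxy
    have key := strictConvexOn_sinh_Ici.secant_strict_mono (a := 0) self_mem_Ici hx hy
      hx0.ne' hy0.ne' hxy
    simpa [sinhc_of_ne_zero hx0.ne', sinhc_of_ne_zero hy0.ne'] using key

end Real

open Real hiding artanh

theorem artanh_eq_real_artanh {x : ℝ} (hx : x ∈ Icc (-1) 1) : artanh x = Real.artanh x :=
  (Real.artanh_eq_half_log hx).symm

theorem Tmax_eq_div {γ : ℝ} (hγ : 0 < γ) (Λ : ℝ) : Tmax γ Λ = Tmax 1 (Λ / γ) / γ := by
  simp only [Tmax, div_lt_one hγ, one_div_div, eq_div_iff hγ.ne', one_mul, eq_comm (a := γ)]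
  split_ifs <;> field_simp

theorem Tmax_one_eq_inv_sinc_arccos {c : ℝ} (hc : c ∈ Ioc 0 1) :
    Tmax 1 c = (sinc (arccos c))⁻¹ := by
  obtain ⟨hc0, hc1⟩ := hc
  rcases hc1.eq_or_lt with rfl | hc1
  · simp [Tmax, arccos_one]
  set θ := arccos c
  have hθ0 : 0 < θ := arccos_pos.2 hc1
  have hθ1 : θ < π / 2 := arccos_lt_pi_div_two.2 hc0
  have hcos : cos θ = c := cos_arccos (by linarith) hc1.le
  have hr : √|(1 / c) ^ 2 - 1| = tan θ := by
    have hc2 : c ^ 2 ≤ 1 := by nlinarith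
    rw [tan_arccos, show (1 / c) ^ 2 - 1 = (1 - c ^ 2) / c ^ 2 by field_simp,
      abs_of_nonneg (div_nonneg (sub_nonneg.2 hc2) (sq_nonneg c)), sqrt_div' _ (sq_nonneg c),
      sqrt_sq hc0.le]
  have hsin : c * tan θ = sin θ := by
    rw [← hcos, tan_eq_sin_div_cos]; field_simp [(cos_pos_of_mem_Ioo ⟨by linarith, hθ1⟩).ne']
  simp only [Tmax, if_pos hc1, hr, hsin, arctan_tan (by linarith) hθ1, sinc_of_ne_zero hθ0.ne']
  field_simp

theorem Tmax_one_eq_inv_sinhc_arcosh {c : ℝ} (hc : 1 ≤ c) :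
    Tmax 1 c = (sinhc (arcosh c))⁻¹ := by
  rcases hc.eq_or_lt with rfl | hc1
  · simp [Tmax, arcosh_zero, sinhc_zero]
  set s := arcosh c
  have hs0 : 0 < s := arcosh_pos hc1
  have hc0 : 0 < c := by linarith
  have hr : √|(1 / c) ^ 2 - 1| = tanh s := by
    have hc2 : 1 ≤ c ^ 2 := by nlinarith
    rw [tanh_arcosh hc, show (1 / c) ^ 2 - 1 = -((c ^ 2 - 1) / c ^ 2) by field_simp; ring,
      abs_neg, abs_of_nonneg (div_nonneg (sub_nonneg.2 hc2) (sq_nonneg c)),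
      sqrt_div' _ (sq_nonneg c), sqrt_sq hc0.le]
  have hsinh : c * tanh s = sinh s := by
    have hcosh : cosh s = c := cosh_arcosh hc
    rw [tanh_eq_sinh_div_cosh, hcosh]; field_simp
  have htanh : tanh s ∈ Icc (-1) 1 := ⟨(neg_one_lt_tanh s).le, (tanh_lt_one s).le⟩
  simp only [Tmax, if_neg hc1.not_gt, if_neg hc1.ne, hr, hsinh, artanh_eq_real_artanh htanh,
    artanh_tanh, sinhc_of_ne_zero hs0.ne']
  field_simp

theorem strictAntiOn_Tmax_one_Ioc : StrictAntiOn (Tmax 1) (Ioc 0 1) := by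
  intro x hx y hy hxy
  have hIcc : Ioc (0 : ℝ) 1 ⊆ Icc (-1) 1 := fun c hc => ⟨by linarith [hc.1], hc.2⟩
  rw [Tmax_one_eq_inv_sinc_arccos hx, Tmax_one_eq_inv_sinc_arccos hy]
  refine inv_strictAnti₀ (sinc_pos_of_mem_Ioo ⟨?_, arccos_lt_pi.2 ?_⟩) (strictAntiOn_sinc
    ⟨arccos_nonneg y, arccos_le_pi y⟩ ⟨arccos_nonneg x, arccos_le_pi x⟩
    (strictAntiOn_arccos (hIcc hx) (hIcc hy) hxy))
  · linarith [arccos_nonneg x, pi_pos]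
  · linarith [hx.1]

theorem strictAntiOn_Tmax_one_Ici : StrictAntiOn (Tmax 1) (Ici 1) := by
  intro x hx y hy hxy
  rw [Tmax_one_eq_inv_sinhc_arcosh hx, Tmax_one_eq_inv_sinhc_arcosh hy]
  exact inv_strictAnti₀ (sinhc_pos _) (strictMonoOn_sinhc (arcosh_nonneg hx) (arcosh_nonneg hy)
    ((arcosh_lt_arcosh (zero_lt_one.trans_le hx) (zero_lt_one.trans_le hy)).2 hxy))

theorem strictAntiOn_Tmax_one : StrictAntiOn (Tmax 1) (Ioi 0) := by
  rw [← Ioc_union_Ici_eq_Ioi zero_lt_one]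
  exact strictAntiOn_Tmax_one_Ioc.union strictAntiOn_Tmax_one_Ici
    (isGreatest_Ioc zero_lt_one) isLeast_Ici

theorem Tmax_strictAnti (γ : ℝ) (hγ : 0 < γ) :
    StrictAntiOn (fun Λ => Tmax γ Λ) (Set.Ioi (0 : ℝ)) := by
  intro a ha b hb hab
  simp only [Tmax_eq_div hγ]
  exact div_lt_div_of_pos_right (strictAntiOn_Tmax_one (div_pos ha hγ) (div_pos hb hγ)
    (div_lt_div_of_pos_right hab hγ)) hγ
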